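/- For a weakly complete system, the recurrence coefficient a_{n+r−1,r} is nonzero for all n ≥ 1. More precisely, writing n = mr + s with 0 < s ≤ r, one has a_{n+r−1,r} = ∫ x P_{n+r−1}(x) A_{n,s}(x) dμ_s(x) ≠ 0. -/

import Mathlib

open Polynomial

/-- The `j`-th entry of the proper multi-index `ν_n`. -/
def properIndex (r n : ℕ) (j : Fin r) : ℕ := (n + r - 1 - j.val) / r

/-- Type II orthogonality conditions (measures identified with moment functionals). -/
def TypeIISol (r : ℕ) (μ : Fin r → (Polynomial ℂ →ₗ[ℂ] ℂ)) (n : ℕ) (P : Polynomial ℂ) : Prop :=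
  P.degree ≤ (n : WithBot ℕ) ∧ ∀ j : Fin r, ∀ ℓ < properIndex r n j, μ j (X ^ ℓ * P) = 0

/-- The proper multi-index `ν_n` is normal. -/
def NormalIndex (r : ℕ) (μ : Fin r → (Polynomial ℂ →ₗ[ℂ] ℂ)) (n : ℕ) : Prop :=
  (∀ P, TypeIISol r μ n P → P = 0 ∨ P.natDegree = n) ∧
  (∀ P Q, TypeIISol r μ n P → TypeIISol r μ n Q → P ≠ 0 → ∃ c : ℂ, Q = c • P)

/-- Weakly complete system: all proper multi-indices are normal. -/
def WeaklyComplete (r : ℕ) (μ : Fin r → (Polynomial ℂ →ₗ[ℂ] ℂ)) : Prop :=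
  ∀ n, NormalIndex r μ n

/-- The type I multiple orthogonal vector polynomials `A_n = (A_{n,1},…,A_{n,r})`,
with the normalization `∫ x^{n-1} ∑_j A_{n,j}(x) dμ_j(x) = 1`. -/
def TypeINormalized (r : ℕ) (μ : Fin r → (Polynomial ℂ →ₗ[ℂ] ℂ))
    (A : ℕ → Fin r → Polynomial ℂ) : Prop :=
  ∀ n, 1 ≤ n →
    (∀ j : Fin r, (A n j).degree < (properIndex r n j : WithBot ℕ)) ∧
    (∀ ℓ : ℕ, ℓ + 2 ≤ n → ∑ j : Fin r, μ j (X ^ ℓ * A n j) = 0) ∧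
    (∑ j : Fin r, μ j (X ^ (n - 1) * A n j) = 1)

/-!
Put `k = n - 1`, `N = k + r` and `s = k mod r`, so that `ν_{k+1} = ν_k + e_s` and
`ν_{N+1} = ν_{k+1} + (1, …, 1)`. Pairing the recurrence
`x P_N = P_{N+1} + ∑ a_{N,j} P_{N-j}` with the type I functional of `A_{k+1}` kills every term
except `a_{N,r} P_k`, whose pairing is `1`; on the left only the `s`-th component survives, since
`deg (x A_{k+1,j}) < ν_{N,j}` for `j ≠ s`. Pairing the same recurrence with `x^{ν_{k,s}} dμ_s`
gives `μ_s(x^{ν_{k,s}+1} P_N) = a_{N,r} μ_s(x^{ν_{k,s}} P_k)`, and the left side is nonzero by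
normality of `ν_{N+1}`: otherwise `P_N` would solve its type II conditions while having degree
`N < N + 1`.
-/

theorem properIndex_succ {r : ℕ} (n : ℕ) (j : Fin r) :
    properIndex r (n + 1) j = properIndex r n j + if j.val = n % r then 1 else 0 := by
  have hj := j.isLt
  have hdvd : r ∣ n + r - j ↔ j.val = n % r := by
    rw [← Nat.modEq_iff_dvd' (by omega), Nat.ModEq, Nat.add_mod_right, Nat.mod_eq_of_lt hj]
  unfold properIndex
  rw [show n + 1 + r - 1 - j = n + r - 1 - j + 1 by omega, Nat.succ_div,
    show n + r - 1 - j + 1 = n + r - j by omega]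
  simp only [hdvd]

theorem properIndex_add_self {r : ℕ} (n : ℕ) (j : Fin r) :
    properIndex r (n + r) j = properIndex r n j + 1 := by
  unfold properIndex
  rw [show n + r + r - 1 - j = n + r - 1 - j + r by omega]
  exact Nat.add_div_right _ j.pos

theorem properIndex_mono {r n₁ n₂ : ℕ} (h : n₁ ≤ n₂) (j : Fin r) :
    properIndex r n₁ j ≤ properIndex r n₂ j := by
  unfold properIndex
  exact Nat.div_le_div_right (by omega)

namespace Polynomial

theorem linearMap_eq_zero_of_degree_lt {R M : Type*} [CommSemiring R] [AddCommMonoid M]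
    [Module R M] (L : R[X] →ₗ[R] M) {d : ℕ} (hL : ∀ ℓ < d, L (X ^ ℓ) = 0) {q : R[X]}
    (hq : q.degree < d) : L q = 0 := by
  classical
  have hker : degreeLT R d ≤ LinearMap.ker L := by
    rw [degreeLT_eq_span_X_pow, Submodule.span_le, Finset.coe_image, Set.image_subset_iff]
    exact fun ℓ hℓ ↦ hL ℓ (Finset.mem_range.1 hℓ)
  exact hker (mem_degreeLT.2 hq)

theorem Monic.linearMap_eq_X_pow {R M : Type*} [CommRing R] [Nontrivial R] [AddCommGroup M]
    [Module R M] (L : R[X] →ₗ[R] M) {d : ℕ} (hL : ∀ ℓ < d, L (X ^ ℓ) = 0) {p : R[X]}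
    (hp : p.Monic) (hdeg : p.natDegree = d) : L p = L (X ^ d) := by
  have hpd : p.degree = d := by rw [degree_eq_natDegree hp.ne_zero, hdeg]
  rw [← sub_eq_zero, ← map_sub]
  refine linearMap_eq_zero_of_degree_lt L hL ?_
  rw [← hpd]
  exact degree_sub_lt_left (by rw [hpd, degree_X_pow]) hp.ne_zero
    (by rw [hp.leadingCoeff, leadingCoeff_X_pow])

theorem degree_X_mul_lt_succ {R : Type*} [Semiring R] [Nontrivial R] {q : R[X]} {d : ℕ}
    (h : q.degree < d) : (X * q).degree < ↑(d + 1) := by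
  rw [X_mul, degree_mul_X, Nat.cast_add, Nat.cast_one]
  exact WithBot.add_lt_add_right (by simp) h

theorem linearMap_X_mul_eq_of_recurrence {R M : Type*} [CommRing R] [AddCommGroup M] [Module R M]
    {r N : ℕ} {P : ℕ → R[X]} {a : ℕ → ℕ → R}
    (hrec : X * P N = P (N + 1) +
      ∑ j ∈ Finset.range (r + 1), a N j • (if j ≤ N then P (N - j) else 0))
    (hrN : r ≤ N) (L : R[X] →ₗ[R] M) (hL : ∀ k, N - r < k → k ≤ N + 1 → L (P k) = 0) :
    L (X * P N) = a N r • L (P (N - r)) := by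
  rw [hrec, map_add, map_sum, hL (N + 1) (by omega) le_rfl, zero_add, Finset.sum_range_succ,
    Finset.sum_eq_zero, zero_add, map_smul, if_pos hrN]
  intro j hj
  rw [Finset.mem_range] at hj
  rw [map_smul, if_pos (by omega), hL _ (by omega) (by omega), smul_zero]

end Polynomial

section MultipleOrthogonality

variable {r : ℕ} {μ : Fin r → (ℂ[X] →ₗ[ℂ] ℂ)}

theorem TypeIISol.map_mul_eq_zero {n : ℕ} {p : ℂ[X]} (hp : TypeIISol r μ n p) {j : Fin r}
    {q : ℂ[X]} (hq : q.degree < properIndex r n j) : μ j (q * p) = 0 :=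
  linearMap_eq_zero_of_degree_lt ((μ j).comp (LinearMap.mulRight ℂ p)) (hp.2 j) hq

theorem NormalIndex.map_X_pow_mul_ne_zero {n : ℕ} (hnorm : NormalIndex r μ (n + 1)) {p : ℂ[X]}
    (hp : TypeIISol r μ n p) (hp0 : p ≠ 0) (hdeg : p.natDegree = n) {s : Fin r}
    (hs : s.val = n % r) : μ s (X ^ properIndex r n s * p) ≠ 0 := by
  intro h
  have hsol : TypeIISol r μ (n + 1) p := by
    refine ⟨hp.1.trans (by exact_mod_cast n.le_succ), fun j ℓ hℓ => ?_⟩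
    rw [properIndex_succ] at hℓ
    by_cases hj : j = s
    · subst hj
      rw [if_pos hs] at hℓ
      rcases Nat.lt_succ_iff_lt_or_eq.1 hℓ with hℓ | rfl
      · exact hp.2 j ℓ hℓ
      · exact h
    · rw [if_neg fun h' => hj (Fin.ext (h'.trans hs.symm)), add_zero] at hℓ
      exact hp.2 j ℓ hℓ
  rcases hnorm.1 p hsol with h0 | hd
  · exact hp0 h0
  · omega

noncomputable def typeIFunctional (μ : Fin r → (ℂ[X] →ₗ[ℂ] ℂ)) (A : Fin r → ℂ[X]) :
    ℂ[X] →ₗ[ℂ] ℂ :=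
  ∑ j, (μ j).comp (LinearMap.mulRight ℂ (A j))

theorem typeIFunctional_apply (A : Fin r → ℂ[X]) (q : ℂ[X]) :
    typeIFunctional μ A q = ∑ j, μ j (q * A j) := by
  simp [typeIFunctional]

namespace TypeINormalized

variable {A : ℕ → Fin r → ℂ[X]}

theorem typeIFunctional_eq_zero (hA : TypeINormalized r μ A) {n k : ℕ} (hn : 1 ≤ n)
    (hnk : n ≤ k) {p : ℂ[X]} (hp : TypeIISol r μ k p) : typeIFunctional μ (A n) p = 0 := by
  rw [typeIFunctional_apply]
  refine Finset.sum_eq_zero fun j _ => ?_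
  rw [mul_comm]
  exact hp.map_mul_eq_zero (((hA n hn).1 j).trans_le (by exact_mod_cast properIndex_mono hnk j))

theorem typeIFunctional_monic (hA : TypeINormalized r μ A) {n : ℕ} {p : ℂ[X]} (hp : p.Monic)
    (hdeg : p.natDegree = n) : typeIFunctional μ (A (n + 1)) p = 1 := by
  obtain ⟨_, horthI, hnormI⟩ := hA (n + 1) (by omega)
  rw [Nat.add_sub_cancel] at hnormI
  rw [hp.linearMap_eq_X_pow _ (fun ℓ hℓ => ?_) hdeg, typeIFunctional_apply, hnormI]
  rw [typeIFunctional_apply]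
  exact horthI ℓ (by omega)

end TypeINormalized

variable {P : ℕ → ℂ[X]} {a : ℕ → ℕ → ℂ}

theorem recurrenceCoeff_eq_typeIFunctional {A : ℕ → Fin r → ℂ[X]}
    (hA : TypeINormalized r μ A)
    (hmonic : ∀ n, (P n).Monic) (hdeg : ∀ n, (P n).natDegree = n)
    (horth : ∀ n, TypeIISol r μ n (P n))
    (hrec : ∀ n, X * P n = P (n + 1) +
      ∑ j ∈ Finset.range (r + 1), a n j • (if j ≤ n then P (n - j) else 0))
    (k : ℕ) {s : Fin r} (hs : s.val = k % r) :
    a (k + r) r = μ s (X * P (k + r) * A (k + 1) s) := by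
  have hΛ : typeIFunctional μ (A (k + 1)) (X * P (k + r)) = a (k + r) r := by
    rw [linearMap_X_mul_eq_of_recurrence (hrec _) (by omega) _
        fun i hi _ => hA.typeIFunctional_eq_zero (by omega) (by omega) (horth i),
      Nat.add_sub_cancel, hA.typeIFunctional_monic (hmonic k) (hdeg k),
      smul_eq_mul, mul_one]
  rw [← hΛ, typeIFunctional_apply, Finset.sum_eq_single s (fun j _ hj => ?_) (by simp)]
  have hjk : j.val ≠ k % r := fun h => hj (Fin.ext (h.trans hs.symm))
  have hAj := (hA (k + 1) (by omega)).1 j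
  rw [properIndex_succ, if_neg hjk, add_zero] at hAj
  rw [mul_right_comm]
  exact (horth _).map_mul_eq_zero (properIndex_add_self k j ▸ degree_X_mul_lt_succ hAj)

theorem recurrenceCoeff_ne_zero (hwc : WeaklyComplete r μ)
    (hmonic : ∀ n, (P n).Monic) (hdeg : ∀ n, (P n).natDegree = n)
    (horth : ∀ n, TypeIISol r μ n (P n))
    (hrec : ∀ n, X * P n = P (n + 1) +
      ∑ j ∈ Finset.range (r + 1), a n j • (if j ≤ n then P (n - j) else 0))
    (k : ℕ) {s : Fin r} (hs : s.val = k % r) : a (k + r) r ≠ 0 := by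
  set L := (μ s).comp (LinearMap.mulLeft ℂ (X ^ properIndex r k s))
  have hLN : L (X * P (k + r)) ≠ 0 := by
    have := (hwc (k + r + 1)).map_X_pow_mul_ne_zero (horth _) (hmonic _).ne_zero (hdeg _)
      (s := s) (by rw [Nat.add_mod_right, hs])
    rwa [properIndex_add_self, pow_succ, mul_assoc] at this
  have hL : ∀ i, k < i → L (P i) = 0 := fun i hi => (horth i).2 s _ <| by
    have := properIndex_mono hi s
    rw [properIndex_succ, if_pos hs] at this
    omega
  have key := linearMap_X_mul_eq_of_recurrence (hrec (k + r)) (by omega) L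
    fun i hi _ => hL i (by omega)
  rw [Nat.add_sub_cancel] at key
  exact fun ha => hLN (by rw [key, ha, zero_smul])

end MultipleOrthogonality

theorem recurrence_coefficient_ne_zero_general (r : ℕ)
    (μ : Fin r → (Polynomial ℂ →ₗ[ℂ] ℂ)) (hwc : WeaklyComplete r μ)
    (P : ℕ → Polynomial ℂ)
    (hmonic : ∀ n, (P n).Monic) (hdeg : ∀ n, (P n).natDegree = n)
    (horth : ∀ n, TypeIISol r μ n (P n))
    (A : ℕ → Fin r → Polynomial ℂ) (hA : TypeINormalized r μ A)
    (a : ℕ → ℕ → ℂ)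
    (hrec : ∀ n, X * P n = P (n + 1) +
      ∑ j ∈ Finset.range (r + 1), a n j • (if j ≤ n then P (n - j) else 0)) :
    ∀ n, 1 ≤ n → ∀ m : ℕ, ∀ sidx : Fin r, n = m * r + (sidx.val + 1) →
      a (n + r - 1) r = μ sidx (X * P (n + r - 1) * A n sidx) ∧
      a (n + r - 1) r ≠ 0 := by
  intro n _ m sidx hn
  obtain ⟨k, rfl⟩ : ∃ k, n = k + 1 := ⟨n - 1, by omega⟩
  have hs : sidx.val = k % r := by
    rw [show k = m * r + sidx by omega, Nat.mul_add_mod', Nat.mod_eq_of_lt sidx.isLt]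
  rw [show k + 1 + r - 1 = k + r by omega]
  exact ⟨recurrenceCoeff_eq_typeIFunctional hA hmonic hdeg horth hrec k hs,
    recurrenceCoeff_ne_zero hwc hmonic hdeg horth hrec k hs⟩

/-- for a weakly complete system the recurrence coefficient `a_{n+r-1,r}` is
nonzero for all `n ≥ 1`; more precisely, writing `n = m r + s` with `0 < s ≤ r` (here the
measure index `s` is `sidx.val + 1` for `sidx : Fin r`),
`a_{n+r-1,r} = ∫ x P_{n+r-1}(x) A_{n,s}(x) dμ_s(x) ≠ 0`. -/
theorem recurrence_coefficient_ne_zero (r : ℕ) (hr : 0 < r)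
    (μ : Fin r → (Polynomial ℂ →ₗ[ℂ] ℂ)) (hwc : WeaklyComplete r μ)
    (P : ℕ → Polynomial ℂ)
    (hmonic : ∀ n, (P n).Monic) (hdeg : ∀ n, (P n).natDegree = n)
    (horth : ∀ n, TypeIISol r μ n (P n))
    (A : ℕ → Fin r → Polynomial ℂ) (hA : TypeINormalized r μ A)
    (a : ℕ → ℕ → ℂ)
    (hrec : ∀ n, X * P n = P (n + 1) +
      ∑ j ∈ Finset.range (r + 1), a n j • (if j ≤ n then P (n - j) else 0)) :
    ∀ n, 1 ≤ n → ∀ m : ℕ, ∀ sidx : Fin r, n = m * r + (sidx.val + 1) →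
      a (n + r - 1) r = μ sidx (X * P (n + r - 1) * A n sidx) ∧
      a (n + r - 1) r ≠ 0 :=
  recurrence_coefficient_ne_zero_general r μ hwc P hmonic hdeg horth A hA a hrec
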